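/- Unblocked cubes are rare: for L ∈ N call the cube B_L(0) := [−L, L)^d blocked if for every 1 ≤ i ≤ d and every choice of coordinates k_j ∈ [−L, L) for j ≠ i, there exists m_i ∈ [−L, L) such that ω(k₁e₁ + ⋯ + m_i e_i + ⋯ + k_d e_d) = 1; otherwise call it unblocked. Then p_L := Q( B_L(0) is unblocked ) → 0 as L → ∞. -/

import Mathlib

open MeasureTheory ProbabilityTheory Filter
open scoped ENNReal Topology

namespace RWDPP

attribute [local instance] Classical.propDecidable


/-- Configuration space `Ω = {0,1}^{ℤ^d}`. -/
abbrev Cfg (d : ℕ) := (Fin d → ℤ) → Bool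

/-- Canonical shift `T_y ω (x) = ω (x + y)`. -/
def shift (d : ℕ) (y : Fin d → ℤ) (ω : Cfg d) : Cfg d := fun x => ω (x + y)

/-- Embedding of `ℤ^d` into `ℝ^d` (with the Euclidean norm). -/
def toE (d : ℕ) (x : Fin d → ℤ) : EuclideanSpace ℝ (Fin d) := WithLp.toLp 2 fun i => (x i : ℝ)

/-- Euclidean norm `|x|` of a lattice point. -/
noncomputable def nrm (d : ℕ) (x : Fin d → ℤ) : ℝ := ‖toE d x‖

/-- Sup norm `|x|_∞` of a lattice point. -/
def nrmInf (d : ℕ) (x : Fin d → ℤ) : ℕ := Finset.univ.sup fun i => (x i).natAbs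

/-- The `2d` unit vectors of `ℤ^d`. -/
def unitVecs (d : ℕ) : Set (Fin d → ℤ) :=
  {e | ∃ i : Fin d, e = Pi.single i 1 ∨ e = Pi.single i (-1)}

/-- `γ_e(ω) = inf {k ≥ 1 : ω(k e) = 1}`. -/
noncomputable def gamma (d : ℕ) (e : Fin d → ℤ) (ω : Cfg d) : ℕ :=
  sInf {k : ℕ | 1 ≤ k ∧ ω ((k : ℤ) • e) = true}

/-- The nearest neighbor of `x` in direction `e`: `x + γ_e(T_x ω) e`. -/
noncomputable def nbr (d : ℕ) (ω : Cfg d) (x e : Fin d → ℤ) : Fin d → ℤ :=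
  x + (gamma d e (shift d x ω) : ℤ) • e

/-- The set `N_x(ω)` of the `2d` nearest neighbors of `x`. -/
noncomputable def nbrs (d : ℕ) (ω : Cfg d) (x : Fin d → ℤ) : Set (Fin d → ℤ) :=
  {y | ∃ e ∈ unitVecs d, y = nbr d ω x e}

/-- `(p 0, …, p m)` is a `𝒫(ω)`-nearest neighbor path. -/
def IsPath (d : ℕ) (ω : Cfg d) (p : ℕ → Fin d → ℤ) (m : ℕ) : Prop :=
  ω (p 0) = true ∧ ∀ k, 1 ≤ k → k ≤ m → p k ∈ nbrs d ω (p (k - 1))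

/-- The event `Ω₀ = {ω : ω(0) = 1}`. -/
def Omega0 (d : ℕ) : Set (Cfg d) := {ω | ω 0 = true}

/-- The σ-field generated by the coordinates in `A`. -/
def coordSigma (d : ℕ) (A : Set (Fin d → ℤ)) : MeasurableSpace (Cfg d) :=
  MeasurableSpace.comap (fun ω (x : A) => ω x) inferInstance

/-- Assumptions (A1)–(A3) on the law `Q` of the discrete point process. -/
structure Assumptions (d : ℕ) (Q : Measure (Cfg d)) : Prop where
  prob : IsProbabilityMeasure Q
  a1_pos : 0 < Q (Omega0 d)
  a1_lt : Q (Omega0 d) < 1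
  a2 : ∃ ℓ : ℝ, 0 < ℓ ∧ ∀ A B : Set (Fin d → ℤ),
    (∀ x ∈ A, ∀ y ∈ B, ℓ ≤ nrm d (x - y)) →
      Indep (coordSigma d A) (coordSigma d B) Q
  a3 : ∀ y : Fin d → ℤ, MeasurePreserving (shift d y) Q Q

/-- The conditioned measure `P = Q(·|Ω₀)`. -/
noncomputable def condP (d : ℕ) (Q : Measure (Cfg d)) : Measure (Cfg d) := Q[|Omega0 d]

/-- One-step transition probability of the RWDPP. -/
noncomputable def stepP (d : ℕ) (ω : Cfg d) (x y : Fin d → ℤ) : ℝ :=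
  if y ∈ nbrs d ω x then 1 / (2 * d) else 0

/-- Discrete trajectory space. -/
abbrev Traj (d : ℕ) := ℕ → Fin d → ℤ

/-- `μ` is the family of quenched laws `P_ω^z` of the RWDPP in the environment `ω`:
`μ z` is a probability measure with `μ z (X₀ = z) = 1` under which `(X_n)` is the Markov
chain with transition probability `1/(2d)` to each nearest neighbor. -/
def IsQuenchedLaw (d : ℕ) (ω : Cfg d) (μ : (Fin d → ℤ) → Measure (Traj d)) : Prop :=
  (∀ z, IsProbabilityMeasure (μ z)) ∧
  ∀ z, ω z = true → ∀ n : ℕ, ∀ x : Traj d,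
    μ z {p | ∀ k ≤ n, p k = x k} =
      (if x 0 = z then 1 else 0) *
        ∏ k ∈ Finset.range n, ENNReal.ofReal (stepP d ω (x k) (x (k + 1)))

/-- `P(N_{t} - N_{s} = k)` for a rate-one Poisson process, `r = t - s`. -/
noncomputable def poissonProb (r : ℝ) (k : ℕ) : ℝ≥0∞ :=
  ENNReal.ofReal (Real.exp (-r) * r ^ k / (Nat.factorial k))

/-- `ν` is the law of (the path of) a rate-one Poisson process `(N_t)_{t ≥ 0}`. -/
def IsPoissonPath (ν : Measure (ℝ → ℕ)) : Prop :=
  IsProbabilityMeasure ν ∧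
  (∀ᵐ η ∂ν, Monotone η ∧ ∀ t : ℝ, t ≤ 0 → η t = 0) ∧
  ∀ m : ℕ, ∀ t : ℕ → ℝ, 0 ≤ t 0 → Monotone t → ∀ k : ℕ → ℕ,
    ν {η | ∀ i < m, η (t (i + 1)) - η (t i) = k i} =
      ∏ i ∈ Finset.range m, poissonProb (t (i + 1) - t i) (k i)

/-- The continuous-time walk `Y_t = X_{N_t}`, realized on the product of the trajectory
space of the discrete walk and the path space of the Poisson process. -/
def Yt (d : ℕ) (q : Traj d × (ℝ → ℕ)) (t : ℝ) : Fin d → ℤ := q.1 (q.2 t)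

/-- `τ_n = inf {t ≥ 0 : |Y_t - Y_0| ≥ n}`. -/
noncomputable def hitTime (d : ℕ) (n : ℕ) (q : Traj d × (ℝ → ℕ)) : ℝ :=
  sInf {t : ℝ | 0 ≤ t ∧ (n : ℝ) ≤ nrm d (Yt d q t - Yt d q 0)}

/-- `max_{x ∈ 𝒫(ω), |x| ≤ n} g x` (Euclidean balls). -/
noncomputable def maxOn (d : ℕ) (ω : Cfg d) (g : (Fin d → ℤ) → ℝ) (n : ℕ) : ℝ :=
  sSup {r : ℝ | ∃ x, ω x = true ∧ nrm d x ≤ (n : ℝ) ∧ r = g x}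

/-- `max_{x ∈ 𝒫(ω), |x|_∞ ≤ n} g x` (sup-norm boxes). -/
noncomputable def maxOnInf (d : ℕ) (ω : Cfg d) (g : (Fin d → ℤ) → ℝ) (n : ℕ) : ℝ :=
  sSup {r : ℝ | ∃ x, ω x = true ∧ nrmInf d x ≤ n ∧ r = g x}

/-- The `2d` unit vectors, as a finite set. -/
noncomputable def unitFinset (d : ℕ) : Finset (Fin d → ℤ) :=
  (Finset.univ.image fun i : Fin d => (Pi.single i 1 : Fin d → ℤ)) ∪
    (Finset.univ.image fun i : Fin d => (Pi.single i (-1) : Fin d → ℤ))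

/-- `x ↦ x + ψ x` is harmonic on `𝒫(ω)` for the RWDPP transition probability. -/
def IsHarmonicDeform (d : ℕ) (ω : Cfg d) (ψ : (Fin d → ℤ) → EuclideanSpace ℝ (Fin d)) : Prop :=
  ∀ x, ω x = true →
    (1 / (2 * (d : ℝ))) • ∑ e ∈ unitFinset d, (toE d (nbr d ω x e) + ψ (nbr d ω x e))
      = toE d x + ψ x

/-- `‖(χ(x,·) - χ(y,·)) 1{x ∈ 𝒫} 1{y ∈ N_x}‖_{L²(P)}²`. -/
noncomputable def corrL2sq (d : ℕ) (P : Measure (Cfg d))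
    (χ : (Fin d → ℤ) → Cfg d → EuclideanSpace ℝ (Fin d)) (x y : Fin d → ℤ) : ℝ≥0∞ :=
  ∫⁻ ω, ENNReal.ofReal
    (if ω x = true ∧ y ∈ nbrs d ω x then ‖χ x ω - χ y ω‖ ^ 2 else 0) ∂P

/-- Graph distance on `𝒫(ω)` (`⊤` if not connected). -/
noncomputable def graphDist (d : ℕ) (ω : Cfg d) (x y : Fin d → ℤ) : ℕ∞ :=
  sInf {m : ℕ∞ | ∃ k : ℕ, m = (k : ℕ∞) ∧ ∃ p : Traj d, p 0 = x ∧ p k = y ∧ IsPath d ω p k}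

/-- The cube `B_L(0) = [-L, L)^d` is blocked: for every direction `i` and every choice of
the other coordinates `k_j ∈ [-L, L)`, some site of the corresponding line segment
belongs to `𝒫(ω)`. -/
def Blocked (d : ℕ) (L : ℕ) (ω : Cfg d) : Prop :=
  ∀ i : Fin d, ∀ k : Fin d → ℤ, (∀ j : Fin d, j ≠ i → -(L : ℤ) ≤ k j ∧ k j < L) →
    ∃ m : ℤ, -(L : ℤ) ≤ m ∧ m < L ∧ ω (Function.update k i m) = true

/-!
If `B_L(0)` is unblocked, some axis-parallel line segment of length `2L` through the cube
misses the point process. Take `ℓ ≤ s := ⌈ℓ⌉` and look only at the `⌊2L/s⌋` sites of that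
segment spaced `s` apart: by finite-range dependence and stationarity they are all vacant with
probability `Q(ω 0 = 0) ^ ⌊2L/s⌋`, which decays geometrically in `L`, while a union bound over
the `d (2L)^d` segments only costs a polynomial factor.
-/

open Function

section Vacancy

variable {d : ℕ} {Q : Measure (Cfg d)}

/-- Assumption (A2) with range `ℓ`. -/
def IndepBeyond (Q : Measure (Cfg d)) (ℓ : ℝ) : Prop :=
  ∀ A B : Set (Fin d → ℤ), (∀ x ∈ A, ∀ y ∈ B, ℓ ≤ nrm d (x - y)) →
    Indep (coordSigma d A) (coordSigma d B) Q

lemma measurableSet_coordSigma_forall_false {A : Set (Fin d → ℤ)} (hA : A.Countable) :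
    MeasurableSet[coordSigma d A] {ω : Cfg d | ∀ x ∈ A, ω x = false} := by
  rw [coordSigma, MeasurableSpace.measurableSet_comap]
  have : Countable A := hA.to_subtype
  refine ⟨⋂ a : A, (fun g : A → Bool => g a) ⁻¹' {false}, MeasurableSet.iInter fun a =>
    (measurable_pi_apply a) (measurableSet_singleton false), ?_⟩
  ext ω
  simp

lemma measure_vacant_eq (hstat : ∀ y, MeasurePreserving (shift d y) Q Q) (x : Fin d → ℤ) :
    Q {ω : Cfg d | ω x = false} = Q {ω | ω 0 = false} := by
  have hm : MeasurableSet {ω : Cfg d | ω 0 = false} :=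
    measurableSet_eq_fun (measurable_pi_apply 0) measurable_const
  rw [← (hstat x).measure_preimage hm.nullMeasurableSet]
  congr 1
  ext ω
  simp [shift]

lemma measure_vacant_lt_one [IsProbabilityMeasure Q] (h : 0 < Q (Omega0 d)) :
    Q {ω : Cfg d | ω 0 = false} < 1 := by
  have hm : MeasurableSet (Omega0 d) :=
    measurableSet_eq_fun (measurable_pi_apply 0) measurable_const
  have hcompl : {ω : Cfg d | ω 0 = false} = (Omega0 d)ᶜ := by
    ext ω
    simp [Omega0]
  rw [hcompl, prob_compl_eq_one_sub hm]
  exact ENNReal.sub_lt_self ENNReal.one_ne_top one_ne_zero h.ne'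

theorem measure_forall_vacant_eq_pow [IsProbabilityMeasure Q] {ℓ : ℝ}
    (hind : IndepBeyond Q ℓ)
    (hstat : ∀ y, MeasurePreserving (shift d y) Q Q)
    {p : ℕ → Fin d → ℤ} (hp : ∀ t n, t < n → ℓ ≤ nrm d (p t - p n)) (n : ℕ) :
    Q {ω : Cfg d | ∀ t < n, ω (p t) = false} = Q {ω | ω 0 = false} ^ n := by
  induction n with
  | zero => simp
  | succ n ih =>
    have hsplit : {ω : Cfg d | ∀ t < n + 1, ω (p t) = false} =
        {ω | ∀ x ∈ p '' Set.Iio n, ω x = false} ∩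
          {ω | ∀ x ∈ ({p n} : Set _), ω x = false} := by
      ext ω
      simp [Nat.le_iff_lt_or_eq, or_imp, forall_and]
    have hsep : ∀ x ∈ p '' Set.Iio n, ∀ y ∈ ({p n} : Set _), ℓ ≤ nrm d (x - y) := by
      rintro _ ⟨t, ht, rfl⟩ _ rfl
      exact hp t n ht
    rw [hsplit, ((hind _ _ hsep).indepSet_of_measurableSet
      (measurableSet_coordSigma_forall_false ((Set.finite_Iio n).image p).countable)
      (measurableSet_coordSigma_forall_false (Set.countable_singleton _))).measure_inter_eq_mul,
      pow_succ, ← ih, ← measure_vacant_eq hstat (p n)]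
    simp

end Vacancy

section Lines

variable {d : ℕ}

lemma nrm_update_sub_update (k : Fin d → ℤ) (i : Fin d) (a b : ℤ) :
    nrm d (update k i a - update k i b) = |((a - b : ℤ) : ℝ)| := by
  have h : toE d (update k i a - update k i b) = EuclideanSpace.single i ((a - b : ℤ) : ℝ) := by
    ext j
    by_cases hj : j = i
    · subst hj
      simp [toE]
    · simp [toE, hj]
  rw [nrm, h, PiLp.norm_single, Real.norm_eq_abs]

lemma exists_vacant_line_of_not_blocked {L s : ℕ} (hL : 0 < L) {ω : Cfg d}
    (hω : ¬ Blocked d L ω) :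
    ∃ i, ∃ k ∈ Fintype.piFinset fun _ : Fin d => Finset.Ico (-(L : ℤ)) L,
      ∀ t < 2 * L / s, ω (update k i (-L + t * s)) = false := by
  simp only [Blocked, not_forall, not_exists, not_and, Bool.not_eq_true] at hω
  obtain ⟨i, k, hk, hvacant⟩ := hω
  refine ⟨i, update k i (-L), ?_, fun t ht => ?_⟩
  · rw [Fintype.mem_piFinset]
    intro j
    by_cases hj : j = i
    · subst hj
      simpa using hL
    · simpa [hj] using hk j hj
  · have hs : 0 < s := Nat.pos_of_ne_zero fun hs => by simp [hs] at ht
    have hts : t * s < 2 * L :=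
      (Nat.mul_lt_mul_of_pos_right ht hs).trans_le (Nat.div_mul_le_self _ _)
    have htsZ : (t : ℤ) * s < 2 * L := by exact_mod_cast hts
    rw [update_idem]
    exact hvacant _ (le_add_of_nonneg_right (by positivity)) (by linarith)

theorem measure_not_blocked_le {Q : Measure (Cfg d)} [IsProbabilityMeasure Q] {ℓ : ℝ}
    (hind : IndepBeyond Q ℓ)
    (hstat : ∀ y, MeasurePreserving (shift d y) Q Q) {s : ℕ} (hℓs : ℓ ≤ s) {L : ℕ}
    (hL : 0 < L) :
    Q {ω | ¬ Blocked d L ω} ≤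
      ((d * (2 * L) ^ d : ℕ) : ℝ≥0∞) * Q {ω | ω 0 = false} ^ (2 * L / s) := by
  set lines := (Finset.univ : Finset (Fin d)) ×ˢ
    Fintype.piFinset fun _ : Fin d => Finset.Ico (-(L : ℤ)) L
  have hcard : lines.card = d * (2 * L) ^ d := by
    simp [lines, Finset.card_product, Fintype.card_piFinset, Int.card_Ico,
      show ((L : ℤ) + L).toNat = 2 * L by omega]
  have hsep : ∀ (i : Fin d) (k : Fin d → ℤ) (t n : ℕ), t < n →
      ℓ ≤ nrm d (update k i (-L + t * s) - update k i (-L + n * s)) := by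
    intro i k t n htn
    have htn' : (1 : ℤ) ≤ n - t := by omega
    have hsZ : (s : ℤ) ≤ |(-L + t * s : ℤ) - (-L + n * s)| :=
      le_abs.2 (Or.inr (by nlinarith))
    rw [nrm_update_sub_update]
    exact hℓs.trans (by exact_mod_cast hsZ)
  set vacantProbes : Fin d × (Fin d → ℤ) → Set (Cfg d) :=
    fun z => {ω | ∀ t < 2 * L / s, ω (update z.2 z.1 (-L + t * s)) = false}
  calc Q {ω | ¬ Blocked d L ω}
      ≤ Q (⋃ z ∈ lines, vacantProbes z) := measure_mono fun ω hω => by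
        obtain ⟨i, k, hk, hvacant⟩ := exists_vacant_line_of_not_blocked hL hω
        exact Set.mem_biUnion (x := (i, k))
          (Finset.mem_product.2 ⟨Finset.mem_univ i, hk⟩) hvacant
    _ ≤ ∑ z ∈ lines, Q (vacantProbes z) := measure_biUnion_finset_le _ _
    _ = ∑ _z ∈ lines, Q {ω : Cfg d | ω 0 = false} ^ (2 * L / s) :=
        Finset.sum_congr rfl fun z _ => measure_forall_vacant_eq_pow hind hstat (hsep z.1 z.2) _
    _ = _ := by rw [Finset.sum_const, nsmul_eq_mul, hcard]

end Lines

theorem _root_.ENNReal.tendsto_natCast_pow_mul_pow_of_lt_one {q : ℝ≥0∞} (hq : q < 1)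
    (k : ℕ) :
    Tendsto (fun m : ℕ => (m : ℝ≥0∞) ^ k * q ^ m) atTop (𝓝 0) := by
  have hreal := tendsto_pow_const_mul_const_pow_of_lt_one k ENNReal.toReal_nonneg
    (ENNReal.toReal_lt_of_lt_ofReal (by simpa using hq))
  convert ENNReal.tendsto_ofReal hreal using 1
  · funext m
    rw [ENNReal.ofReal_mul (by positivity), ENNReal.ofReal_pow ENNReal.toReal_nonneg,
      ENNReal.ofReal_toReal hq.ne_top, ENNReal.ofReal_pow (Nat.cast_nonneg m),
      ENNReal.ofReal_natCast]
  · simp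

theorem _root_.Nat.le_two_mul_mul_div {n s : ℕ} (hs : 0 < s) (h : s ≤ n) :
    n ≤ 2 * s * (n / s) := by
  have hlt := Nat.lt_mul_div_succ n hs
  have hpos : 1 ≤ n / s := Nat.div_pos h hs
  nlinarith

theorem unblocked_prob_tendsto_zero_general (d : ℕ)
    (Q : Measure (Cfg d)) (hQ : Assumptions d Q) :
    Tendsto (fun L : ℕ => Q {ω | ¬ Blocked d L ω}) atTop (𝓝 0) := by
  have := hQ.prob
  obtain ⟨ℓ, hℓ, hind⟩ := hQ.a2
  set s := ⌈ℓ⌉₊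
  have hs : 0 < s := Nat.ceil_pos.2 hℓ
  set q := Q {ω : Cfg d | ω 0 = false}
  have hm : Tendsto (fun L : ℕ => 2 * L / s) atTop atTop :=
    (Nat.tendsto_div_const_atTop hs.ne').comp (tendsto_id.const_mul_atTop' two_pos)
  have hbound : Tendsto (fun L : ℕ => ((d * (2 * s) ^ d : ℕ) : ℝ≥0∞) *
      (((2 * L / s : ℕ) : ℝ≥0∞) ^ d * q ^ (2 * L / s))) atTop (𝓝 0) := by
    have h := ENNReal.Tendsto.const_mul ((ENNReal.tendsto_natCast_pow_mul_pow_of_lt_one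
      (measure_vacant_lt_one hQ.a1_pos) d).comp hm)
      (Or.inr (ENNReal.natCast_ne_top (d * (2 * s) ^ d)))
    rwa [mul_zero] at h
  refine tendsto_of_tendsto_of_tendsto_of_le_of_le' tendsto_const_nhds hbound
    (Eventually.of_forall fun _ => zero_le) ?_
  filter_upwards [eventually_ge_atTop s] with L hL
  calc Q {ω | ¬ Blocked d L ω} ≤ ((d * (2 * L) ^ d : ℕ) : ℝ≥0∞) * q ^ (2 * L / s) :=
        measure_not_blocked_le hind hQ.a3 (Nat.le_ceil ℓ) (hs.trans_le hL)
    _ ≤ ((d * (2 * s * (2 * L / s)) ^ d : ℕ) : ℝ≥0∞) * q ^ (2 * L / s) := by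
        have := Nat.le_two_mul_mul_div hs (show s ≤ 2 * L by omega)
        gcongr
    _ = _ := by push_cast; ring

/-- **unblocked cubes are rare.**
`p_L = Q(B_L(0) is unblocked) → 0` as `L → ∞`. -/
theorem unblocked_prob_tendsto_zero (d : ℕ) (hd : 1 ≤ d)
    (Q : Measure (Cfg d)) (hQ : Assumptions d Q) :
    Tendsto (fun L : ℕ => Q {ω | ¬ Blocked d L ω}) atTop (𝓝 0) :=
  unblocked_prob_tendsto_zero_general d Q hQ

end RWDPP
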